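/- arXiv:2506.23452 — 3 statements merged into one kernel-verified Lean document; each statement's English description precedes it below -/
import Mathlib

section
/- For a fixed derangement δ of [n] with n ≥ 2, the sum over all derangements d of [n] of the number of positions i with d(i) = δ(i) equals (n/(n-1))·D_n, where D_n is the number of derangements of [n]. Equivalently, (n-1)·Σ_{d ∈ D_n} |{i : d(i) = δ(i)}| = n·D_n. -/
/-!
Exchanging the two sums, the left side counts pairs `(d, i)` with `d i = δ i`. For a fixed `i`,
conjugation by a transposition fixing `i` shows that the derangements are equidistributed over
the `n - 1` possible values of `d i`, so each `i` contributes `D_n / (n - 1)`.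
-/

open Finset Equiv

section

variable {α : Type*} [Fintype α] [DecidableEq α]

theorem filter_forall_apply_ne_eq_toFinset_derangements
    [DecidablePred fun d : Perm α => ∀ i, d i ≠ i] :
    univ.filter (fun d : Perm α => ∀ i, d i ≠ i) = (derangements α).toFinset := by
  ext d
  simp only [mem_filter, mem_univ, true_and, Set.mem_toFinset]
  rfl

theorem card_filter_derangements_apply_eq_congr {i j j' : α} (hj : j ≠ i) (hj' : j' ≠ i) :
    #{d ∈ (derangements α).toFinset | d i = j} =
      #{d ∈ (derangements α).toFinset | d i = j'} := by
  set σ := swap j j'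
  have hσi : σ.symm i = i := swap_apply_of_ne_of_ne hj.symm hj'.symm
  refine card_equiv σ.permCongr fun d => ?_
  simp only [mem_filter, Set.mem_toFinset, permCongr_apply, hσi]
  refine and_congr ⟨fun h k hk => h (σ k) ?_, fun h k hk => h (σ k) ?_⟩ ?_
  · simpa [σ] using congrArg σ hk
  · simp [σ, hk]
  · simp [σ, swap_apply_eq_iff]

theorem card_sub_one_mul_card_filter_derangements_apply_eq {i j : α} (hj : j ≠ i) :
    (Fintype.card α - 1) * #{d ∈ (derangements α).toFinset | d i = j} =
      Fintype.card (derangements α) := by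
  have hfib : Fintype.card (derangements α) =
      ∑ j' ∈ univ.erase i, #{d ∈ (derangements α).toFinset | d i = j'} := by
    rw [← Set.toFinset_card]
    exact card_eq_sum_card_fiberwise fun d hd =>
      mem_erase.mpr ⟨Set.mem_toFinset.mp (mem_coe.mp hd) i, mem_univ _⟩
  rw [hfib, sum_congr rfl fun j' hj' =>
      card_filter_derangements_apply_eq_congr (mem_erase.mp hj').1 hj,
    sum_const, card_erase_of_mem (mem_univ i), card_univ, smul_eq_mul]

end

theorem stmt1_general (n : ℕ) (δ : Equiv.Perm (Fin n)) (hδ : ∀ i, δ i ≠ i) :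
    (n - 1) * ∑ d ∈ Finset.univ.filter (fun d : Equiv.Perm (Fin n) => ∀ i, d i ≠ i),
      (Finset.univ.filter (fun i : Fin n => d i = δ i)).card
    = n * numDerangements n := by
  rw [filter_forall_apply_ne_eq_toFinset_derangements]
  calc (n - 1) * ∑ d ∈ (derangements (Fin n)).toFinset, #{i | d i = δ i}
      = ∑ i, (n - 1) * #{d ∈ (derangements (Fin n)).toFinset | d i = δ i} := by
        rw [← mul_sum]
        exact congrArg _ (sum_card_bipartiteAbove_eq_sum_card_bipartiteBelow _)
    _ = ∑ _i : Fin n, Fintype.card (derangements (Fin n)) := sum_congr rfl fun i _ => by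
        simpa only [Fintype.card_fin] using
          card_sub_one_mul_card_filter_derangements_apply_eq (hδ i)
    _ = n * numDerangements n := by
        rw [sum_const, card_univ, Fintype.card_fin, smul_eq_mul,
          card_derangements_fin_eq_numDerangements]

theorem stmt1 (n : ℕ) (hn : 2 ≤ n) (δ : Equiv.Perm (Fin n)) (hδ : ∀ i, δ i ≠ i) :
    (n - 1) * ∑ d ∈ Finset.univ.filter (fun d : Equiv.Perm (Fin n) => ∀ i, d i ≠ i),
      (Finset.univ.filter (fun i : Fin n => d i = δ i)).card
    = n * numDerangements n :=
  stmt1_general n δ hδ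
end

section
/- The number of derangements of [n] sharing at least one common value in some position with a fixed derangement δ, counted with multiplicity of common positions (i.e., Σ_{d derangement} |{i : d(i) = δ(i)}|), is independent of the choice of δ. -/
open Finset Equiv

private lemma exists_perm_pair {n : ℕ} (i j i' j' : Fin n) (h : j ≠ i) (h' : j' ≠ i') :
    ∃ σ : Equiv.Perm (Fin n), σ i = i' ∧ σ j = j' := by
  refine ⟨Equiv.swap (Equiv.swap i i' j) j' * Equiv.swap i i', ?_, ?_⟩
  · have h1 : Equiv.swap i i' j ≠ i' := by
      intro hc
      apply h
      have := (Equiv.swap i i').injective (a₁ := j) (a₂ := i) (by simp [hc])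
      exact this
    simp only [Equiv.Perm.mul_apply, Equiv.swap_apply_left]
    exact Equiv.swap_apply_of_ne_of_ne (Ne.symm h1) (Ne.symm h')
  · simp [Equiv.Perm.mul_apply]

private lemma card_pair_eq {n : ℕ} (i j i' j' : Fin n) (h : j ≠ i) (h' : j' ≠ i') :
    (Finset.univ.filter fun d : Equiv.Perm (Fin n) => (∀ x, d x ≠ x) ∧ d i = j).card
    = (Finset.univ.filter fun d : Equiv.Perm (Fin n) => (∀ x, d x ≠ x) ∧ d i' = j').card := by
  obtain ⟨σ, hσi, hσj⟩ := exists_perm_pair i j i' j' h h'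
  apply Finset.card_bij (fun d _ => σ * d * σ⁻¹)
  · intro d hd
    simp only [Finset.mem_filter, Finset.mem_univ, true_and] at hd ⊢
    constructor
    · intro x hx
      have : d (σ⁻¹ x) = σ⁻¹ x := by
        have := congrArg (σ⁻¹ ·) hx
        simpa [Equiv.Perm.mul_apply] using this
      exact hd.1 _ this
    · have : σ⁻¹ i' = i := by rw [← hσi]; simp
      simp [Equiv.Perm.mul_apply, this, hd.2, hσj]
  · intro a ha b hb hab
    have := congrArg (fun e => σ⁻¹ * e * σ) hab
    simpa [mul_assoc] using this
  · intro b hb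
    refine ⟨σ⁻¹ * b * σ, ?_, by group⟩
    simp only [Finset.mem_filter, Finset.mem_univ, true_and] at hb ⊢
    constructor
    · intro x hx
      have : b (σ x) = σ x := by
        have := congrArg (σ ·) hx
        simpa [Equiv.Perm.mul_apply] using this
      exact hb.1 _ this
    · simp [Equiv.Perm.mul_apply, hσi, hb.2, ← hσj]

private lemma sum_eq {n : ℕ} (δ : Equiv.Perm (Fin n)) (hδ : ∀ i, δ i ≠ i) :
    ∑ d ∈ Finset.univ.filter (fun d : Equiv.Perm (Fin n) => ∀ i, d i ≠ i),
      (Finset.univ.filter (fun i : Fin n => d i = δ i)).card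
    = ∑ i : Fin n,
      (Finset.univ.filter fun d : Equiv.Perm (Fin n) => (∀ x, d x ≠ x) ∧ d i = δ i).card := by
  have h : ∀ i : Fin n, (Finset.univ.filter fun d : Equiv.Perm (Fin n) => (∀ x, d x ≠ x) ∧ d i = δ i)
      = (Finset.univ.filter fun d : Equiv.Perm (Fin n) => ∀ x, d x ≠ x).filter (fun d => d i = δ i) := by
    intro i; rw [Finset.filter_filter]
  simp only [h, Finset.card_filter]
  exact Finset.sum_comm

theorem stmt3 (n : ℕ) (hn : 2 ≤ n) (δ₁ δ₂ : Equiv.Perm (Fin n))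
    (hδ₁ : ∀ i, δ₁ i ≠ i) (hδ₂ : ∀ i, δ₂ i ≠ i) :
    ∑ d ∈ Finset.univ.filter (fun d : Equiv.Perm (Fin n) => ∀ i, d i ≠ i),
      (Finset.univ.filter (fun i : Fin n => d i = δ₁ i)).card
    = ∑ d ∈ Finset.univ.filter (fun d : Equiv.Perm (Fin n) => ∀ i, d i ≠ i),
      (Finset.univ.filter (fun i : Fin n => d i = δ₂ i)).card := by
  rw [sum_eq δ₁ hδ₁, sum_eq δ₂ hδ₂]
  apply Finset.sum_congr rfl
  intro i _
  exact card_pair_eq i (δ₁ i) i (δ₂ i) (hδ₁ i) (hδ₂ i)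
end

section
/- For n ≥ 3, the number of derangements of [n] with exactly two excedances equals 2^n − 2n − 1. -/
open Finset Equiv

section Rigid
variable {n : ℕ}

lemma min_of_down (π : Perm (Fin n)) (s : Finset (Fin n)) (m : Fin n)
    (hmap : ∀ x ∈ s, π x ∈ s) (hm : m ∈ s)
    (hdown : ∀ x ∈ s, x ≠ m → π x < x) : ∀ y ∈ s, m ≤ y := by
  intro y hy
  by_contra hlt
  push_neg at hlt
  -- consider min of s
  have hne : s.Nonempty := ⟨m, hm⟩
  have hmin := s.min'_le
  have hmem := s.min'_mem hne
  have hne2 : s.min' hne ≠ m := by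
    intro h
    exact absurd (h ▸ s.min'_le y hy) (not_le.mpr hlt)
  have := hdown _ hmem hne2
  exact absurd (s.min'_le _ (hmap _ hmem)) (not_le.mpr this)

/-- telescoping image claim -/
lemma down_image (π : Perm (Fin n)) (s : Finset (Fin n)) (m : Fin n)
    (hmap : ∀ x ∈ s, π x ∈ s) (hm : m ∈ s)
    (hdown : ∀ x ∈ s, x ≠ m → π x < x) :
    ∀ x ∈ s, ((s.filter (fun y => y ≤ x)).erase m).image π = s.filter (fun y => y < x) := by
  intro x hx
  have hminle : ∀ y ∈ s, m ≤ y := min_of_down π s m hmap hm hdown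
  apply Finset.eq_of_subset_of_card_le
  · intro z hz
    simp only [Finset.mem_image] at hz
    obtain ⟨y, hy, rfl⟩ := hz
    have hy1 := Finset.mem_of_mem_erase hy
    have hyne := Finset.ne_of_mem_erase hy
    rw [Finset.mem_filter] at hy1
    rw [Finset.mem_filter]
    exact ⟨hmap _ hy1.1, lt_of_lt_of_le (hdown _ hy1.1 hyne) hy1.2⟩
  · rw [Finset.card_image_of_injective _ π.injective]
    have hmmem : m ∈ s.filter (fun y => y ≤ x) :=
      Finset.mem_filter.mpr ⟨hm, hminle x hx⟩
    rw [Finset.card_erase_of_mem hmmem]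
    have : s.filter (fun y => y ≤ x) = insert x (s.filter (fun y => y < x)) := by
      ext z
      simp only [Finset.mem_filter, Finset.mem_insert]
      constructor
      · rintro ⟨hz, hle⟩
        rcases lt_or_eq_of_le hle with h | h
        · exact Or.inr ⟨hz, h⟩
        · exact Or.inl h
      · rintro (rfl | ⟨hz, hlt⟩)
        · exact ⟨hx, le_refl _⟩
        · exact ⟨hz, le_of_lt hlt⟩
    rw [this, Finset.card_insert_of_notMem (by simp)]
    omega

lemma down_unique (π ρ : Perm (Fin n)) (s : Finset (Fin n)) (m : Fin n)
    (hmapπ : ∀ x ∈ s, π x ∈ s) (hmapρ : ∀ x ∈ s, ρ x ∈ s) (hm : m ∈ s)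
    (hdownπ : ∀ x ∈ s, x ≠ m → π x < x) (hdownρ : ∀ x ∈ s, x ≠ m → ρ x < x) :
    ∀ x ∈ s, π x = ρ x := by
  have key : ∀ k : ℕ, ∀ x : Fin n, x.val = k → x ∈ s → x ≠ m → π x = ρ x := by
    intro k
    induction k using Nat.strong_induction_on with
    | _ k ih =>
      intro x hxk hx hxm
      have hIm : ((s.filter (fun y => y < x)).erase m).image π
          = ((s.filter (fun y => y < x)).erase m).image ρ := by
        apply Finset.image_congr
        intro y hy
        have hy1 := Finset.mem_of_mem_erase hy
        rw [Finset.mem_filter] at hy1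
        exact ih y.val (hxk ▸ hy1.2) y rfl hy1.1 (Finset.ne_of_mem_erase hy)
      have hsplit : (s.filter (fun y => y ≤ x)).erase m
          = insert x ((s.filter (fun y => y < x)).erase m) := by
        ext z
        simp only [Finset.mem_erase, Finset.mem_filter, Finset.mem_insert]
        constructor
        · rintro ⟨hzm, hz, hle⟩
          rcases lt_or_eq_of_le hle with h | h
          · exact Or.inr ⟨hzm, hz, h⟩
          · exact Or.inl h
        · rintro (rfl | ⟨hzm, hz, hlt⟩)
          · exact ⟨hxm, hx, le_refl _⟩
          · exact ⟨hzm, hz, le_of_lt hlt⟩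
      have h1 := down_image π s m hmapπ hm hdownπ x hx
      have h2 := down_image ρ s m hmapρ hm hdownρ x hx
      rw [hsplit, Finset.image_insert] at h1 h2
      rw [hIm] at h1
      rw [← h2] at h1
      -- insert (π x) A = insert (ρ x) A with π x ∉ A, ρ x ∉ A
      have hπnot : π x ∉ ((s.filter (fun y => y < x)).erase m).image ρ := by
        rw [← hIm]
        simp only [Finset.mem_image]
        rintro ⟨y, hy, hEq⟩
        have hy1 := Finset.mem_of_mem_erase hy
        rw [Finset.mem_filter] at hy1
        exact absurd (π.injective hEq ▸ hy1.2) (lt_irrefl x)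
      have : π x ∈ insert (ρ x) (((s.filter (fun y => y < x)).erase m).image ρ) := by
        rw [← h1]; exact Finset.mem_insert_self _ _
      rcases Finset.mem_insert.mp this with h | h
      · exact h
      · exact absurd h hπnot
  have hne : ∀ x ∈ s, x ≠ m → π x = ρ x := fun x hx hxm => key x.val x rfl hx hxm
  intro x hx
  by_cases hxm : x = m
  · have hImEq : (s.erase m).image π = (s.erase m).image ρ := by
      apply Finset.image_congr
      intro y hy
      exact hne y (Finset.mem_of_mem_erase hy) (Finset.ne_of_mem_erase hy)
    have hsub : (s.erase m).image π ⊆ s := by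
      intro z hz
      simp only [Finset.mem_image] at hz
      obtain ⟨y, hy, rfl⟩ := hz
      exact hmapπ _ (Finset.mem_of_mem_erase hy)
    have hcard : ((s.erase m).image π).card = s.card - 1 := by
      rw [Finset.card_image_of_injective _ π.injective, Finset.card_erase_of_mem hm]
    have hdiffcard : (s \ (s.erase m).image π).card = 1 := by
      rw [Finset.card_sdiff_of_subset hsub, hcard]
      have : 1 ≤ s.card := Finset.card_pos.mpr ⟨m, hm⟩
      omega
    have hπmem : π m ∈ s \ (s.erase m).image π := by
      rw [Finset.mem_sdiff]
      refine ⟨hmapπ _ hm, ?_⟩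
      simp only [Finset.mem_image]
      rintro ⟨y, hy, hEq⟩
      exact (Finset.ne_of_mem_erase hy) (π.injective hEq)
    have hρmem : ρ m ∈ s \ (s.erase m).image π := by
      rw [hImEq, Finset.mem_sdiff]
      refine ⟨hmapρ _ hm, ?_⟩
      simp only [Finset.mem_image]
      rintro ⟨y, hy, hEq⟩
      exact (Finset.ne_of_mem_erase hy) (ρ.injective hEq)
    subst hxm
    exact Finset.card_le_one.mp (le_of_eq hdiffcard) _ hπmem _ hρmem
  · exact hne x hx hxm

end Rigid

section Witness
variable {n : ℕ}

def w1 (n : ℕ) : Perm (Fin (n+1)) := (finRotate (n+1))⁻¹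

lemma w1_apply (x : Fin (n+1)) : w1 n x = x - 1 := by
  have h : finRotate (n+1) (x - 1) = x := by
    rw [finRotate_succ_apply, sub_add_cancel]
  exact ((Equiv.Perm.eq_inv_iff_eq).mpr h).symm

def sig (f : Fin (n+1)) : Perm (Fin (n+1)) := Equiv.swap f (f-1) * w1 n

lemma sig_apply (f x : Fin (n+1)) :
    sig f x = if x = f then f else if x = f + 1 then f - 1 else x - 1 := by
  rw [sig, Equiv.Perm.mul_apply, w1_apply]
  split_ifs with h1 h2
  · subst h1; rw [Equiv.swap_apply_right]
  · subst h2; rw [add_sub_cancel_right, Equiv.swap_apply_left]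
  · rw [Equiv.swap_apply_of_ne_of_ne]
    · intro h; exact h2 (by rw [← h, sub_add_cancel])
    · intro h; exact h1 (by rwa [sub_left_inj] at h)

end Witness

section Sets
variable {n : ℕ}

lemma sub_one_val (x : Fin (n+1)) : (x - 1).val = if x.val = 0 then n else x.val - 1 := by
  rw [Fin.coe_sub_one]
  by_cases hx : x = 0
  · have hx' : (x:ℕ) = 0 := by rw [hx]; rfl
    rw [if_pos hx, if_pos hx']
  · have hx' : ¬ (x:ℕ) = 0 := fun hc => hx (Fin.ext (by simpa using hc))
    rw [if_neg hx, if_neg hx']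

lemma add_one_val (x : Fin (n+1)) : (x + 1).val = if x.val = n then 0 else x.val + 1 := by
  rw [Fin.val_add_one]
  by_cases hx : x = Fin.last n
  · have hx' : (x:ℕ) = n := by rw [hx]; rfl
    rw [if_pos hx, if_pos hx']
  · have hx' : ¬ (x:ℕ) = n := fun hc => hx (Fin.ext (by simpa using hc))
    rw [if_neg hx, if_neg hx']

lemma w1_fix (hn : 1 ≤ n) (x : Fin (n+1)) : w1 n x ≠ x := by
  rw [w1_apply, Ne, Fin.ext_iff, sub_one_val]
  have := x.is_le
  split_ifs <;> omega

lemma w1_exc (hn : 1 ≤ n) : (univ.filter fun x : Fin (n+1) => x < w1 n x) = {0} := by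
  ext x
  simp only [Finset.mem_filter, Finset.mem_univ, true_and, Finset.mem_singleton, w1_apply,
    Fin.lt_def, Fin.ext_iff, sub_one_val, Fin.val_zero]
  have := x.is_le
  split_ifs <;> omega

lemma sig_fix (hn : 2 ≤ n) (f : Fin (n+1)) :
    (univ.filter fun x : Fin (n+1) => sig f x = x) = {f} := by
  ext x
  simp only [Finset.mem_filter, Finset.mem_univ, true_and, Finset.mem_singleton, sig_apply]
  have hxle := x.is_le
  have hfle := f.is_le
  by_cases h1 : x = f
  · simp [h1]
  · rw [if_neg h1]
    have h1' : x.val ≠ f.val := fun hc => h1 (Fin.ext hc)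
    have hiff : ¬ (x = f) := h1
    by_cases h2 : x = f + 1
    · rw [if_pos h2]
      rw [Fin.ext_iff, add_one_val] at h2
      rw [Fin.ext_iff, sub_one_val]
      constructor
      · intro h; exfalso; split_ifs at h h2 <;> omega
      · intro h; exact absurd h h1
    · rw [if_neg h2]
      rw [Fin.ext_iff, sub_one_val]
      constructor
      · intro h; exfalso; split_ifs at h <;> omega
      · intro h; exact absurd h h1

lemma sig_exc (hn : 2 ≤ n) (f : Fin (n+1)) :
    (univ.filter fun x : Fin (n+1) => x < sig f x) = {if f = 0 then 1 else 0} := by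
  ext x
  simp only [Finset.mem_filter, Finset.mem_univ, true_and, Finset.mem_singleton, sig_apply]
  have hxle := x.is_le
  have hfle := f.is_le
  have hval1 : (1 : Fin (n+1)).val = 1 := by
    rw [Fin.val_one', Nat.mod_eq_of_lt (by omega)]
  -- convert RHS to val form
  have hRHS : (x = if f = 0 then 1 else 0) ↔ (x.val = if f.val = 0 then 1 else 0) := by
    by_cases hf0 : f = 0
    · have : (f:ℕ) = 0 := by rw [hf0]; rfl
      rw [if_pos hf0, if_pos this, Fin.ext_iff, hval1]
    · have : ¬(f:ℕ) = 0 := fun hc => hf0 (Fin.ext (by simpa using hc))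
      rw [if_neg hf0, if_neg this, Fin.ext_iff, Fin.val_zero]
  rw [hRHS, Fin.lt_def]
  by_cases h1 : x = f
  · rw [if_pos h1]
    have h1' : x.val = f.val := by rw [h1]
    constructor
    · intro h; omega
    · intro h; split_ifs at h <;> omega
  · rw [if_neg h1]
    have h1' : x.val ≠ f.val := fun hc => h1 (Fin.ext hc)
    by_cases h2 : x = f + 1
    · rw [if_pos h2]
      rw [Fin.ext_iff, add_one_val] at h2
      rw [sub_one_val]
      split_ifs at h2 ⊢ <;> omega
    · rw [if_neg h2]
      rw [Fin.ext_iff, add_one_val] at h2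
      rw [sub_one_val]
      split_ifs at h2 ⊢ <;> omega

end Sets

section Counts
variable {n : ℕ}

lemma C1count (hn : 1 ≤ n) :
    (univ.filter fun e : Perm (Fin (n+1)) =>
      (∀ i, e i ≠ i) ∧ (univ.filter fun i => i < e i).card = 1).card = 1 := by
  have hset : (univ.filter fun e : Perm (Fin (n+1)) =>
      (∀ i, e i ≠ i) ∧ (univ.filter fun i => i < e i).card = 1) = {w1 n} := by
    ext e
    simp only [Finset.mem_filter, Finset.mem_univ, true_and, Finset.mem_singleton]
    constructor
    · rintro ⟨hder, hcard⟩
      obtain ⟨a, ha⟩ := Finset.card_eq_one.mp hcard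
      have h0mem : (0 : Fin (n+1)) ∈ univ.filter fun i => i < e i := by
        simp only [Finset.mem_filter, Finset.mem_univ, true_and]
        exact Fin.pos_of_ne_zero (hder 0)
      have ha0 : a = 0 := by
        rw [ha, Finset.mem_singleton] at h0mem; exact h0mem.symm
      subst ha0
      have hde : ∀ x : Fin (n+1), x ∈ (univ : Finset (Fin (n+1))) → x ≠ 0 → e x < x := by
        intro x _ hx0
        have hnot : x ∉ univ.filter fun i => i < e i := by
          rw [ha, Finset.mem_singleton]; exact hx0
        simp only [Finset.mem_filter, Finset.mem_univ, true_and, not_lt] at hnot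
        exact lt_of_le_of_ne hnot (hder x)
      have hdw : ∀ x : Fin (n+1), x ∈ (univ : Finset (Fin (n+1))) → x ≠ 0 → w1 n x < x := by
        intro x _ hx0
        have hnot : x ∉ univ.filter fun i => i < w1 n i := by
          rw [w1_exc hn, Finset.mem_singleton]; exact hx0
        simp only [Finset.mem_filter, Finset.mem_univ, true_and, not_lt] at hnot
        exact lt_of_le_of_ne hnot (w1_fix hn x)
      have := down_unique e (w1 n) univ 0 (fun x _ => Finset.mem_univ _)
        (fun x _ => Finset.mem_univ _) (Finset.mem_univ _) hde hdw
      exact Equiv.ext fun x => this x (Finset.mem_univ x)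
    · rintro rfl
      refine ⟨w1_fix hn, ?_⟩
      rw [w1_exc hn, Finset.card_singleton]
  rw [hset, Finset.card_singleton]

lemma Fcount (hn : 2 ≤ n) :
    (univ.filter fun e : Perm (Fin (n+1)) =>
      (univ.filter fun i => e i = i).card = 1 ∧
      (univ.filter fun i => i < e i).card = 1).card = n + 1 := by
  have hval1 : ((1 : Fin (n+1)) : ℕ) = 1 := by
    rw [Fin.val_one', Nat.mod_eq_of_lt (by omega)]
  have hset : (univ.filter fun e : Perm (Fin (n+1)) =>
      (univ.filter fun i => e i = i).card = 1 ∧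
      (univ.filter fun i => i < e i).card = 1) = univ.image (fun f => sig f) := by
    ext e
    simp only [Finset.mem_filter, Finset.mem_univ, true_and, Finset.mem_image]
    constructor
    · rintro ⟨hfix, hexc⟩
      obtain ⟨f, hf⟩ := Finset.card_eq_one.mp hfix
      obtain ⟨a, ha⟩ := Finset.card_eq_one.mp hexc
      have hef : e f = f := by
        have : f ∈ univ.filter fun i => e i = i := by rw [hf]; exact Finset.mem_singleton_self f
        simpa using this
      have haexc : a < e a := by
        have : a ∈ univ.filter fun i => i < e i := by rw [ha]; exact Finset.mem_singleton_self a
        simpa using this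
      have haf : a ≠ f := by
        intro hc; rw [hc, hef] at haexc; exact lt_irrefl _ haexc
      set s : Finset (Fin (n+1)) := univ.erase f with hs
      set a' : Fin (n+1) := if f = 0 then 1 else 0 with ha'
      have ha'f : a' ≠ f := by
        rw [ha']
        split_ifs with h0
        · rw [h0]; intro hc; rw [Fin.ext_iff, hval1] at hc; simp at hc
        · intro hc; exact h0 hc.symm
      have has : a ∈ s := Finset.mem_erase.mpr ⟨haf, Finset.mem_univ _⟩
      have ha's : a' ∈ s := Finset.mem_erase.mpr ⟨ha'f, Finset.mem_univ _⟩
      have hmape : ∀ x ∈ s, e x ∈ s := by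
        intro x hx
        refine Finset.mem_erase.mpr ⟨?_, Finset.mem_univ _⟩
        intro hc
        exact (Finset.ne_of_mem_erase hx) (e.injective (hc.trans hef.symm))
      have hmaps : ∀ x ∈ s, sig f x ∈ s := by
        intro x hx
        refine Finset.mem_erase.mpr ⟨?_, Finset.mem_univ _⟩
        intro hc
        have hxf2 : x = f := (sig f).injective (by rw [hc, sig_apply, if_pos rfl])
        exact (Finset.ne_of_mem_erase hx) hxf2
      have hdowne : ∀ x ∈ s, x ≠ a → e x < x := by
        intro x hx hxa
        have hnot : x ∉ univ.filter fun i => i < e i := by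
          rw [ha, Finset.mem_singleton]; exact hxa
        simp only [Finset.mem_filter, Finset.mem_univ, true_and, not_lt] at hnot
        refine lt_of_le_of_ne hnot ?_
        intro hc
        have : x ∈ univ.filter fun i => e i = i := by simp [hc]
        rw [hf, Finset.mem_singleton] at this
        exact (Finset.ne_of_mem_erase hx) this
      have hdows : ∀ x ∈ s, x ≠ a' → sig f x < x := by
        intro x hx hxa
        have hnot : x ∉ univ.filter fun i => i < sig f i := by
          rw [sig_exc hn f, Finset.mem_singleton]; exact hxa
        simp only [Finset.mem_filter, Finset.mem_univ, true_and, not_lt] at hnot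
        refine lt_of_le_of_ne hnot ?_
        intro hc
        have : x ∈ univ.filter fun i => sig f i = i := by simp [hc]
        rw [sig_fix hn f, Finset.mem_singleton] at this
        exact (Finset.ne_of_mem_erase hx) this
      have hmin1 := min_of_down e s a hmape has hdowne
      have hmin2 := min_of_down (sig f) s a' hmaps ha's hdows
      have haa' : a = a' := le_antisymm (hmin1 a' ha's) (hmin2 a has)
      rw [haa'] at hdowne has
      have hagree := down_unique e (sig f) s a' hmape hmaps has hdowne hdows
      refine ⟨f, ?_⟩
      apply Equiv.ext
      intro x
      by_cases hxf : x = f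
      · rw [hxf, hef, sig_apply, if_pos rfl]
      · exact (hagree x (Finset.mem_erase.mpr ⟨hxf, Finset.mem_univ _⟩)).symm
    · rintro ⟨f, rfl⟩
      rw [sig_fix hn f, sig_exc hn f, Finset.card_singleton, Finset.card_singleton]
      exact ⟨rfl, rfl⟩
  rw [hset]
  rw [Finset.card_image_of_injective _ ?_, Finset.card_univ, Fintype.card_fin]
  intro f g hfg
  have hfg' : sig f = sig g := hfg
  have h1 : ({f} : Finset (Fin (n+1))) = {g} := by
    rw [← sig_fix hn f, ← sig_fix hn g, hfg']
  exact Finset.singleton_injective h1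

end Counts

section Char
variable {m : ℕ}

lemma charA (p : Fin (m+1)) (e : Perm (Fin m)) :
    (∀ i, Perm.decomposeFin.symm (p, e) i ≠ i) ↔
      (p ≠ 0 ∧ ∀ i, e i = i → i.succ = p) := by
  constructor
  · intro hder
    constructor
    · intro hc
      exact hder 0 (by rw [Perm.decomposeFin_symm_apply_zero, hc])
    · intro i hi
      by_contra hcon
      apply hder i.succ
      rw [Perm.decomposeFin_symm_apply_succ, hi,
        Equiv.swap_apply_of_ne_of_ne (Fin.succ_ne_zero i) hcon]
  · rintro ⟨hp, hfix⟩ x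
    induction x using Fin.cases with
    | zero => rw [Perm.decomposeFin_symm_apply_zero]; exact hp
    | succ i =>
      rw [Perm.decomposeFin_symm_apply_succ]
      by_cases hc : (e i).succ = p
      · rw [hc, Equiv.swap_apply_right]
        exact (Fin.succ_ne_zero i).symm
      · rw [Equiv.swap_apply_of_ne_of_ne (Fin.succ_ne_zero (e i)) hc]
        intro hEq
        have : e i = i := Fin.succ_injective _ hEq
        exact hc (hEq.trans (hfix i this))

lemma charB (p : Fin (m+1)) (e : Perm (Fin m)) (hp : p ≠ 0) :
    (univ.filter fun x => x < Perm.decomposeFin.symm (p, e) x) =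
      insert 0 ((univ.filter fun i => i < e i ∧ (e i).succ ≠ p).image Fin.succ) := by
  ext x
  simp only [Finset.mem_filter, Finset.mem_univ, true_and, Finset.mem_insert, Finset.mem_image]
  induction x using Fin.cases with
  | zero =>
    rw [Perm.decomposeFin_symm_apply_zero]
    simp only [eq_self_iff_true, true_or, iff_true]
    exact Fin.pos_of_ne_zero hp
  | succ i =>
    rw [Perm.decomposeFin_symm_apply_succ]
    have hsz : ¬ (i.succ = 0) := Fin.succ_ne_zero i
    by_cases hc : (e i).succ = p
    · rw [hc, Equiv.swap_apply_right]
      simp only [hsz, false_or]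
      constructor
      · intro h; exact absurd h (by simp [Fin.le_zero_iff.mp (le_of_lt h)])
      · rintro ⟨j, ⟨hj1, hj2⟩, hj3⟩
        exfalso
        have : j = i := Fin.succ_injective _ hj3
        rw [this] at hj2
        exact hj2 hc
    · rw [Equiv.swap_apply_of_ne_of_ne (Fin.succ_ne_zero (e i)) hc]
      simp only [hsz, false_or]
      rw [Fin.succ_lt_succ_iff]
      constructor
      · intro h; exact ⟨i, ⟨h, hc⟩, rfl⟩
      · rintro ⟨j, ⟨hj1, hj2⟩, hj3⟩
        have : j = i := Fin.succ_injective _ hj3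
        rwa [this] at hj1

lemma charFull (p : Fin (m+1)) (e : Perm (Fin m)) :
    ((∀ i, Perm.decomposeFin.symm (p, e) i ≠ i) ∧
     (univ.filter fun x => x < Perm.decomposeFin.symm (p, e) x).card = 2) ↔
      (p ≠ 0 ∧ (∀ i, e i = i → i.succ = p) ∧
       (univ.filter fun i => i < e i ∧ (e i).succ ≠ p).card = 1) := by
  constructor
  · rintro ⟨hder, hcard⟩
    obtain ⟨hp, hfix⟩ := (charA p e).mp hder
    refine ⟨hp, hfix, ?_⟩
    rw [charB p e hp] at hcard
    rw [Finset.card_insert_of_notMem (by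
      simp only [Finset.mem_image]
      rintro ⟨j, _, hj⟩
      exact Fin.succ_ne_zero j hj)] at hcard
    rw [Finset.card_image_of_injective _ (Fin.succ_injective m)] at hcard
    omega
  · rintro ⟨hp, hfix, hcard⟩
    refine ⟨(charA p e).mpr ⟨hp, hfix⟩, ?_⟩
    rw [charB p e hp]
    rw [Finset.card_insert_of_notMem (by
      simp only [Finset.mem_image]
      rintro ⟨j, _, hj⟩
      exact Fin.succ_ne_zero j hj)]
    rw [Finset.card_image_of_injective _ (Fin.succ_injective m), hcard]

end Char

section Fiber
variable {m : ℕ}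

lemma erase_key (e : Perm (Fin m)) (j : Fin m) :
    (univ.filter fun i => i < e i ∧ (e i).succ ≠ ((e j).succ : Fin (m+1))) =
      (univ.filter fun i => i < e i).erase j := by
  ext i
  simp only [Finset.mem_filter, Finset.mem_univ, true_and, Finset.mem_erase]
  constructor
  · rintro ⟨h1, h2⟩
    refine ⟨fun hij => h2 (by rw [hij]), h1⟩
  · rintro ⟨hij, h1⟩
    refine ⟨h1, fun hc => hij (e.injective (Fin.succ_injective _ hc))⟩

lemma fiber_reindex (e : Perm (Fin m)) :
    (univ.filter fun p : Fin (m+1) => p ≠ 0 ∧ (∀ i, e i = i → i.succ = p) ∧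
       (univ.filter fun i => i < e i ∧ (e i).succ ≠ p).card = 1)
    = (univ.filter fun j : Fin m => (∀ i, e i = i → i = e j) ∧
       ((univ.filter fun i => i < e i).erase j).card = 1).image (fun j => (e j).succ) := by
  ext p
  simp only [Finset.mem_filter, Finset.mem_univ, true_and, Finset.mem_image]
  constructor
  · rintro ⟨hp, hfix, hcard⟩
    refine ⟨e.symm (p.pred hp), ⟨?_, ?_⟩, ?_⟩
    · intro i hi
      have hq : (e (e.symm (p.pred hp))).succ = p := by
        rw [Equiv.apply_symm_apply, Fin.succ_pred]
      exact Fin.succ_injective _ ((hfix i hi).trans hq.symm)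
    · have hq : (e (e.symm (p.pred hp))).succ = p := by
        rw [Equiv.apply_symm_apply, Fin.succ_pred]
      rw [← erase_key e (e.symm (p.pred hp)), hq]
      exact hcard
    · rw [Equiv.apply_symm_apply, Fin.succ_pred]
  · rintro ⟨j, ⟨hfix', hcard'⟩, rfl⟩
    refine ⟨Fin.succ_ne_zero _, fun i hi => by rw [hfix' i hi], ?_⟩
    rw [erase_key e j]
    exact hcard'

lemma fiberN (e : Perm (Fin m)) :
    (univ.filter fun p : Fin (m+1) => p ≠ 0 ∧ (∀ i, e i = i → i.succ = p) ∧
       (univ.filter fun i => i < e i ∧ (e i).succ ≠ p).card = 1).card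
    = (if (∀ i, e i ≠ i) ∧ (univ.filter fun i => i < e i).card = 2 then 2 else 0)
    + (if (∀ i, e i ≠ i) ∧ (univ.filter fun i => i < e i).card = 1 then m - 1 else 0)
    + (if (univ.filter fun i => e i = i).card = 1 ∧
          (univ.filter fun i => i < e i).card = 1 then 1 else 0) := by
  rw [fiber_reindex e,
    Finset.card_image_of_injective _
      (show Function.Injective (fun j => (e j).succ) from
        fun a b hab => e.injective (Fin.succ_injective _ hab))]
  set E := univ.filter fun i => i < e i with hE
  by_cases hder : ∀ i, e i ≠ i
  · have hfixtriv : ∀ j : Fin m, (∀ i, e i = i → i = e j) := by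
      intro j i hi; exact absurd hi (hder i)
    have hnofix : (univ.filter fun i => e i = i) = ∅ := by
      ext i; simp only [Finset.mem_filter, Finset.mem_univ, true_and, Finset.notMem_empty,
        iff_false]
      exact hder i
    by_cases h2 : E.card = 2
    · rw [if_pos ⟨hder, h2⟩, if_neg (by rintro ⟨_, h1⟩; omega),
        if_neg (by rintro ⟨h1, _⟩; rw [hnofix] at h1; simp at h1)]
      have : (univ.filter fun j : Fin m => (∀ i, e i = i → i = e j) ∧
          (E.erase j).card = 1) = E := by
        ext j
        simp only [Finset.mem_filter, Finset.mem_univ, true_and]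
        constructor
        · rintro ⟨_, hc⟩
          by_contra hj
          rw [Finset.erase_eq_of_notMem hj] at hc
          omega
        · intro hj
          exact ⟨hfixtriv j, by rw [Finset.card_erase_of_mem hj, h2]⟩
      rw [this, h2]
    · by_cases h1 : E.card = 1
      · rw [if_neg (by rintro ⟨_, hc⟩; omega), if_pos ⟨hder, h1⟩,
          if_neg (by rintro ⟨hc, _⟩; rw [hnofix] at hc; simp at hc)]
        have : (univ.filter fun j : Fin m => (∀ i, e i = i → i = e j) ∧
            (E.erase j).card = 1) = univ \ E := by
          ext j
          simp only [Finset.mem_filter, Finset.mem_univ, true_and, Finset.mem_sdiff]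
          constructor
          · rintro ⟨_, hc⟩
            intro hj
            rw [Finset.card_erase_of_mem hj, h1] at hc
            omega
          · intro hj
            exact ⟨hfixtriv j, by rw [Finset.erase_eq_of_notMem hj, h1]⟩
        rw [this, Finset.card_sdiff_of_subset (Finset.subset_univ E), Finset.card_univ,
          Fintype.card_fin, h1]
        omega
      · rw [if_neg (by rintro ⟨_, hc⟩; omega), if_neg (by rintro ⟨_, hc⟩; omega),
          if_neg (by rintro ⟨hc, _⟩; rw [hnofix] at hc; simp at hc)]
        have : (univ.filter fun j : Fin m => (∀ i, e i = i → i = e j) ∧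
            (E.erase j).card = 1) = ∅ := by
          ext j
          simp only [Finset.mem_filter, Finset.mem_univ, true_and, Finset.notMem_empty,
            iff_false]
          rintro ⟨_, hc⟩
          by_cases hj : j ∈ E
          · rw [Finset.card_erase_of_mem hj] at hc; omega
          · rw [Finset.erase_eq_of_notMem hj] at hc; omega
        rw [this, Finset.card_empty]
  · -- e has a fixed point
    push_neg at hder
    obtain ⟨f, hf⟩ := hder
    have hfmem : f ∈ univ.filter fun i => e i = i := by simp [hf]
    rw [if_neg (by rintro ⟨hc, _⟩; exact hc f hf),
      if_neg (by rintro ⟨hc, _⟩; exact hc f hf)]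
    by_cases hfix1 : (univ.filter fun i => e i = i).card = 1
    · by_cases hexc1 : E.card = 1
      · rw [if_pos ⟨hfix1, hexc1⟩]
        have hfset : (univ.filter fun i => e i = i) = {f} := by
          obtain ⟨g, hg⟩ := Finset.card_eq_one.mp hfix1
          rw [hg] at hfmem ⊢
          rw [Finset.mem_singleton] at hfmem
          rw [hfmem]
        have hfnexc : f ∉ E := by
          rw [hE]
          simp only [Finset.mem_filter, Finset.mem_univ, true_and, not_lt]
          rw [hf]
        have : (univ.filter fun j : Fin m => (∀ i, e i = i → i = e j) ∧
            (E.erase j).card = 1) = {f} := by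
          ext j
          simp only [Finset.mem_filter, Finset.mem_univ, true_and, Finset.mem_singleton]
          constructor
          · rintro ⟨hc, _⟩
            have := hc f hf
            have hej : e j = e f := by rw [← this, hf]
            exact e.injective hej
          · intro hjf
            subst hjf
            refine ⟨fun i hi => ?_, ?_⟩
            · have hmem2 : i ∈ ({j} : Finset (Fin m)) := by rw [← hfset]; simp [hi]
              rw [Finset.mem_singleton] at hmem2
              rw [hmem2, hf]
            · rw [Finset.erase_eq_of_notMem hfnexc, hexc1]
        rw [this, Finset.card_singleton]
      · rw [if_neg (by rintro ⟨_, hc⟩; exact hexc1 hc)]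
        have : (univ.filter fun j : Fin m => (∀ i, e i = i → i = e j) ∧
            (E.erase j).card = 1) = ∅ := by
          ext j
          simp only [Finset.mem_filter, Finset.mem_univ, true_and, Finset.notMem_empty,
            iff_false]
          rintro ⟨hc, hc2⟩
          have hjf : j = f := by
            have := hc f hf
            exact e.injective (by rw [← this, hf])
          subst hjf
          have hfnexc : j ∉ E := by
            rw [hE]
            simp only [Finset.mem_filter, Finset.mem_univ, true_and, not_lt]
            rw [hf]
          rw [Finset.erase_eq_of_notMem hfnexc] at hc2
          exact hexc1 hc2
        rw [this, Finset.card_empty]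
    · rw [if_neg (by rintro ⟨hc, _⟩; exact hfix1 hc)]
      -- at least two fixed points
      have h2fix : 2 ≤ (univ.filter fun i => e i = i).card := by
        have h1le : 1 ≤ (univ.filter fun i => e i = i).card :=
          Finset.card_pos.mpr ⟨f, hfmem⟩
        omega
      obtain ⟨g, hg, f', hf', hgf'⟩ := Finset.one_lt_card.mp
        (show 1 < (univ.filter fun i => e i = i).card by omega)
      have hgfix : e g = g := by simpa using hg
      have hf'fix : e f' = f' := by simpa using hf'
      have : (univ.filter fun j : Fin m => (∀ i, e i = i → i = e j) ∧
          (E.erase j).card = 1) = ∅ := by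
        ext j
        simp only [Finset.mem_filter, Finset.mem_univ, true_and, Finset.notMem_empty,
          iff_false]
        rintro ⟨hc, _⟩
        exact hgf' ((hc g hgfix).trans (hc f' hf'fix).symm)
      rw [this, Finset.card_empty]
end Fiber

section Assemble
variable {m : ℕ}

lemma recurrence (m : ℕ) :
    (univ.filter fun π : Perm (Fin (m+1)) =>
        (∀ i, π i ≠ i) ∧ (univ.filter fun i => i < π i).card = 2).card
    = 2 * (univ.filter fun e : Perm (Fin m) =>
        (∀ i, e i ≠ i) ∧ (univ.filter fun i => i < e i).card = 2).card
    + (m - 1) * (univ.filter fun e : Perm (Fin m) =>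
        (∀ i, e i ≠ i) ∧ (univ.filter fun i => i < e i).card = 1).card
    + (univ.filter fun e : Perm (Fin m) =>
        (univ.filter fun i => e i = i).card = 1 ∧
        (univ.filter fun i => i < e i).card = 1).card := by
  rw [Finset.card_filter]
  rw [← Fintype.sum_equiv (Perm.decomposeFin.symm)
    (fun pe : Fin (m+1) × Perm (Fin m) =>
      if (∀ i, Perm.decomposeFin.symm pe i ≠ i) ∧
         (univ.filter fun i => i < Perm.decomposeFin.symm pe i).card = 2 then 1 else 0)
    (fun σ : Perm (Fin (m+1)) =>
      if (∀ i, σ i ≠ i) ∧ (univ.filter fun i => i < σ i).card = 2 then 1 else 0)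
    (fun pe => rfl)]
  rw [Fintype.sum_prod_type]
  rw [Finset.sum_comm]
  have hinner : ∀ e : Perm (Fin m),
      (∑ p : Fin (m+1), if (∀ i, Perm.decomposeFin.symm (p, e) i ≠ i) ∧
        (univ.filter fun i => i < Perm.decomposeFin.symm (p, e) i).card = 2 then 1 else 0)
      = (if (∀ i, e i ≠ i) ∧ (univ.filter fun i => i < e i).card = 2 then 2 else 0)
      + (if (∀ i, e i ≠ i) ∧ (univ.filter fun i => i < e i).card = 1 then m - 1 else 0)
      + (if (univ.filter fun i => e i = i).card = 1 ∧
            (univ.filter fun i => i < e i).card = 1 then 1 else 0) := by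
    intro e
    rw [← Finset.card_filter]
    rw [show (univ.filter fun p : Fin (m+1) =>
        (∀ i, Perm.decomposeFin.symm (p, e) i ≠ i) ∧
        (univ.filter fun i => i < Perm.decomposeFin.symm (p, e) i).card = 2)
      = (univ.filter fun p : Fin (m+1) => p ≠ 0 ∧ (∀ i, e i = i → i.succ = p) ∧
        (univ.filter fun i => i < e i ∧ (e i).succ ≠ p).card = 1) from
      Finset.filter_congr fun p _ => by
        constructor
        · intro h; exact (charFull p e).mp ⟨h.1, h.2⟩
        · intro h
          obtain ⟨h1, h2⟩ := (charFull p e).mpr h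
          exact ⟨h1, h2⟩]
    exact fiberN e
  rw [Finset.sum_congr rfl (fun e _ => hinner e)]
  rw [Finset.sum_add_distrib, Finset.sum_add_distrib]
  congr 1
  · congr 1
    · rw [← Finset.sum_filter, Finset.sum_const, smul_eq_mul, mul_comm]
    · rw [← Finset.sum_filter, Finset.sum_const, smul_eq_mul, mul_comm]
  · rw [← Finset.sum_filter, Finset.sum_const, smul_eq_mul, mul_one]

end Assemble

lemma two_pow_ge (n : ℕ) (h : 3 ≤ n) : 2*n + 1 ≤ 2^n := by
  induction n, h using Nat.le_induction with
  | base => norm_num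
  | succ n hn ih =>
    rw [pow_succ]
    omega

theorem stmt9 (n : ℕ) (hn : 3 ≤ n) :
    (Finset.univ.filter (fun π : Equiv.Perm (Fin n) =>
        (∀ i, π i ≠ i) ∧ (Finset.univ.filter (fun i : Fin n => i < π i)).card = 2)).card
    = 2 ^ n - 2 * n - 1 := by
  induction n, hn using Nat.le_induction with
  | base => decide
  | succ n hn ih =>
    obtain ⟨k, rfl⟩ : ∃ k, n = k + 1 := ⟨n - 1, by omega⟩
    have hrec := recurrence (k+1)
    rw [C1count (by omega : 1 ≤ k), Fcount (by omega : 2 ≤ k), ih] at hrec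
    rw [hrec]
    have h2 := two_pow_ge (k+1) (by omega)
    rw [pow_succ]
    omega
end
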